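/- Let A = diag(A_1,...,A_n) with A_i ∈ ℝ^{m×d_i} and suppose λ_min⁺(S) ≥ μ_A where S = (1/n)∑ A_iA_iᵀ, and σ_max²(A_i) ≤ L_A for all i. Let W' ∈ ℝ^{mn×mn} be symmetric PSD with range W' = L_m^⊥ and λ_min⁺(W')² ≥ μ_{W'}, and set γ² = (μ_A + L_A)/μ_{W'}. Then for B = [A γW'], every z in the orthogonal complement of ker Bᵀ satisfies ‖Bᵀ z‖² ≥ (μ_A/2)‖z‖², i.e., σ_min⁺²(B) ≥ μ_A/2. -/

import Mathlib

/-!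
Write `z = z₁ + 𝟙 ⊗ w`, where `w` is the mean of the `n` blocks of `z`, so that `z₁` has zero
block sums and `‖z‖² = ‖z₁‖² + n ‖w‖²`. As `W'` is symmetric with range `L_m^⊥`, it kills the
consensus vectors `𝟙 ⊗ v`, hence `γ² ‖W' z‖² = γ² ‖W' z₁‖² ≥ (μ_A + L_A) ‖z₁‖²`. Blockwise,
`‖A_iᵀ z_i‖² ≥ ½ ‖A_iᵀ w‖² - L_A ‖z₁,ᵢ‖²`, so `‖Aᵀ z‖² ≥ (n/2) wᵀ S w - L_A ‖z₁‖²`: the `L_A` lost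
here is paid for by the `W'` part. Finally, if `S v = 0` then every `A_iᵀ v` vanishes and
`𝟙 ⊗ v ∈ ker Bᵀ`, so `z ⊥ ker Bᵀ` gives `w ⊥ ker S` and `wᵀ S w ≥ μ_A ‖w‖²`. Altogether
`‖Bᵀ z‖² ≥ μ_A ‖z₁‖² + (n μ_A / 2) ‖w‖² ≥ (μ_A / 2) ‖z‖²`.
-/

open Matrix

section DotProduct

variable {ι κ : Type*} [Fintype ι] [Fintype κ]

lemma dotProduct_self_nonneg (v : ι → ℝ) : 0 ≤ v ⬝ᵥ v :=
  Fintype.sum_nonneg fun i => mul_self_nonneg (v i)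

lemma sq_dotProduct_le (u v : ι → ℝ) : (u ⬝ᵥ v) ^ 2 ≤ (u ⬝ᵥ u) * (v ⬝ᵥ v) := by
  simpa [dotProduct, pow_two] using Finset.sum_mul_sq_le_sq_mul_sq Finset.univ u v

lemma half_dotProduct_self_sub_le (a b : ι → ℝ) :
    1 / 2 * (a ⬝ᵥ a) - b ⬝ᵥ b ≤ (a + b) ⬝ᵥ (a + b) := by
  have h := dotProduct_self_nonneg (a + b + b)
  simp only [add_dotProduct, dotProduct_add, dotProduct_comm b a] at h ⊢
  linarith

lemma transpose_mulVec_dotProduct_self_le {M : Matrix ι κ ℝ} {L : ℝ} (hL : 0 ≤ L)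
    (hM : ∀ v, (M *ᵥ v) ⬝ᵥ (M *ᵥ v) ≤ L * (v ⬝ᵥ v)) (u : ι → ℝ) :
    (Mᵀ *ᵥ u) ⬝ᵥ (Mᵀ *ᵥ u) ≤ L * (u ⬝ᵥ u) := by
  set v := Mᵀ *ᵥ u
  have hv : v ⬝ᵥ v = u ⬝ᵥ (M *ᵥ v) := by rw [dotProduct_mulVec u M v, ← mulVec_transpose]
  rcases (dotProduct_self_nonneg v).eq_or_lt with h0 | h0
  · rw [← h0]
    exact mul_nonneg hL (dotProduct_self_nonneg u)
  · have : (v ⬝ᵥ v) ^ 2 ≤ (u ⬝ᵥ u) * (L * (v ⬝ᵥ v)) :=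
      calc (v ⬝ᵥ v) ^ 2 = (u ⬝ᵥ (M *ᵥ v)) ^ 2 := by rw [hv]
        _ ≤ (u ⬝ᵥ u) * ((M *ᵥ v) ⬝ᵥ (M *ᵥ v)) := sq_dotProduct_le _ _
        _ ≤ (u ⬝ᵥ u) * (L * (v ⬝ᵥ v)) :=
          mul_le_mul_of_nonneg_left (hM v) (dotProduct_self_nonneg u)
    nlinarith

lemma transpose_mulVec_dotProduct_self (M : Matrix κ ι ℝ) (u : κ → ℝ) :
    (Mᵀ *ᵥ u) ⬝ᵥ (Mᵀ *ᵥ u) = u ⬝ᵥ (M * Mᵀ) *ᵥ u := by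
  rw [← mulVec_mulVec, dotProduct_mulVec u M, ← mulVec_transpose]

lemma mulVec_eq_zero_of_forall_mulVec_dotProduct_eq_zero {W : Matrix ι ι ℝ} (hW : Wᵀ = W)
    {x : ι → ℝ} (h : ∀ y, (W *ᵥ y) ⬝ᵥ x = 0) : W *ᵥ x = 0 := by
  have : (W *ᵥ x) ⬝ᵥ (W *ᵥ x) = 0 := by
    rw [dotProduct_mulVec, ← mulVec_transpose, hW]
    exact h _
  exact dotProduct_self_eq_zero.mp this

end DotProduct

section Gram

variable {ι κ : Type*} [Fintype ι] [Fintype κ] {d : ι → Type*} [∀ i, Fintype (d i)]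

lemma sum_transpose_mulVec_dotProduct_self (M : ∀ i, Matrix κ (d i) ℝ) (u : κ → ℝ) :
    ∑ i, ((M i)ᵀ *ᵥ u) ⬝ᵥ ((M i)ᵀ *ᵥ u) = u ⬝ᵥ (∑ i, M i * (M i)ᵀ) *ᵥ u := by
  simp only [transpose_mulVec_dotProduct_self, sum_mulVec, dotProduct_sum]

lemma transpose_mulVec_eq_zero_of_sum_mul_transpose_mulVec_eq_zero
    {M : ∀ i, Matrix κ (d i) ℝ} {u : κ → ℝ} (h : (∑ i, M i * (M i)ᵀ) *ᵥ u = 0) (i : ι) :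
    (M i)ᵀ *ᵥ u = 0 := by
  have hsum := sum_transpose_mulVec_dotProduct_self M u
  rw [h, dotProduct_zero,
    Fintype.sum_eq_zero_iff_of_nonneg fun j => dotProduct_self_nonneg _] at hsum
  exact dotProduct_self_eq_zero.mp (congrFun hsum i)

end Gram

section Consensus

variable {ι κ : Type*} [Fintype ι]

/-- `𝟙 ⊗ f` -/
def consensus (f : κ → ℝ) : ι × κ → ℝ := fun p => f p.2

noncomputable def blockMean (z : ι × κ → ℝ) : κ → ℝ := fun c => (∑ i, z (i, c)) / Fintype.card ι

lemma dotProduct_eq_sum_blocks [Fintype κ] (u v : ι × κ → ℝ) :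
    u ⬝ᵥ v = ∑ i, (fun c => u (i, c)) ⬝ᵥ (fun c => v (i, c)) :=
  Fintype.sum_prod_type _

lemma dotProduct_consensus [Fintype κ] (y : ι × κ → ℝ) (f : κ → ℝ) :
    y ⬝ᵥ consensus f = ∑ c, (∑ i, y (i, c)) * f c := by
  rw [dotProduct, Fintype.sum_prod_type, Finset.sum_comm]
  simp only [consensus, Finset.sum_mul]

lemma mulVec_consensus_eq_zero [Fintype κ] {W : Matrix (ι × κ) (ι × κ) ℝ} (hW : Wᵀ = W)
    (hrange : ∀ y c, ∑ i, (W *ᵥ y) (i, c) = 0) (f : κ → ℝ) : W *ᵥ consensus f = 0 :=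
  mulVec_eq_zero_of_forall_mulVec_dotProduct_eq_zero hW fun y => by
    simp only [dotProduct_consensus, hrange, zero_mul, Finset.sum_const_zero]

variable [Nonempty ι]

lemma sum_sub_consensus_blockMean (z : ι × κ → ℝ) (c : κ) :
    ∑ i, (z - consensus (blockMean z) : ι × κ → ℝ) (i, c) = 0 := by
  simp only [Pi.sub_apply, consensus, blockMean, Finset.sum_sub_distrib, Finset.sum_const,
    Finset.card_univ, nsmul_eq_mul]
  field_simp
  ring

lemma dotProduct_consensus_eq_card_mul [Fintype κ] (z : ι × κ → ℝ) (f : κ → ℝ) :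
    z ⬝ᵥ consensus f = Fintype.card ι * (blockMean z ⬝ᵥ f) := by
  rw [dotProduct_consensus, dotProduct, Finset.mul_sum]
  refine Finset.sum_congr rfl fun c _ => ?_
  simp only [blockMean]
  field_simp

lemma blockMean_dotProduct_eq_zero_of_dotProduct_consensus_eq_zero [Fintype κ]
    {z : ι × κ → ℝ} {f : κ → ℝ} (h : z ⬝ᵥ consensus f = 0) : blockMean z ⬝ᵥ f = 0 := by
  rw [dotProduct_consensus_eq_card_mul] at h
  exact (mul_eq_zero.mp h).resolve_left (Nat.cast_ne_zero.mpr Fintype.card_ne_zero)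

lemma dotProduct_self_eq_sub_consensus_blockMean [Fintype κ] (z : ι × κ → ℝ) :
    z ⬝ᵥ z = (z - consensus (blockMean z)) ⬝ᵥ (z - consensus (blockMean z))
      + Fintype.card ι * (blockMean z ⬝ᵥ blockMean z) := by
  set w := blockMean z
  set z₁ := z - consensus w
  have hcross : z₁ ⬝ᵥ consensus w = 0 := by
    simp only [dotProduct_consensus, z₁, w, sum_sub_consensus_blockMean, zero_mul,
      Finset.sum_const_zero]
  have hcons : consensus (ι := ι) w ⬝ᵥ consensus w = Fintype.card ι * (w ⬝ᵥ w) := by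
    rw [dotProduct_consensus]
    simp only [consensus, Finset.sum_const, Finset.card_univ, nsmul_eq_mul, dotProduct,
      Finset.mul_sum, mul_assoc]
  rw [show z = z₁ + consensus w by simp [z₁], add_dotProduct, dotProduct_add, dotProduct_add,
    dotProduct_comm (consensus w) z₁, hcross, hcons]
  ring

lemma mul_dotProduct_sub_consensus_blockMean_le [Fintype κ] {W : Matrix (ι × κ) (ι × κ) ℝ}
    (hW : Wᵀ = W) (hrange : Set.range W.mulVec = {y | ∀ c, ∑ i, y (i, c) = 0}) {μ : ℝ}
    (hlow : ∀ y ∈ Set.range W.mulVec, μ * (y ⬝ᵥ y) ≤ (W *ᵥ y) ⬝ᵥ (W *ᵥ y)) (z : ι × κ → ℝ) :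
    μ * ((z - consensus (blockMean z)) ⬝ᵥ (z - consensus (blockMean z)))
      ≤ (W *ᵥ z) ⬝ᵥ (W *ᵥ z) := by
  have hkill := mulVec_consensus_eq_zero hW fun y => hrange.subset (Set.mem_range_self y)
  have hz₁ : z - consensus (blockMean z) ∈ Set.range W.mulVec :=
    hrange ▸ sum_sub_consensus_blockMean z
  simpa only [mulVec_sub, hkill, sub_zero] using hlow _ hz₁

end Consensus

section BlockDiagonal

variable {ι κ : Type*} [Fintype ι] [DecidableEq ι] [Fintype κ] {d : ι → Type*}

/-- `diag(M₁, …, Mₙ)` -/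
def blockDiagonalProdSigma (M : ∀ i, Matrix κ (d i) ℝ) : Matrix (ι × κ) (Σ i, d i) ℝ :=
  of fun p q => if p.1 = q.1 then M q.1 p.2 q.2 else 0

lemma blockDiagonalProdSigma_transpose_mulVec (M : ∀ i, Matrix κ (d i) ℝ) (v : ι × κ → ℝ)
    (i : ι) (q : d i) :
    ((blockDiagonalProdSigma M)ᵀ *ᵥ v) ⟨i, q⟩ = ((M i)ᵀ *ᵥ fun c => v (i, c)) q := by
  simp only [blockDiagonalProdSigma, mulVec, dotProduct, transpose_apply, of_apply,
    Fintype.sum_prod_type, ite_mul, zero_mul]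
  rw [Finset.sum_comm]
  simp [Finset.sum_ite_eq']

variable [∀ i, Fintype (d i)]

lemma blockDiagonalProdSigma_transpose_mulVec_dotProduct_self (M : ∀ i, Matrix κ (d i) ℝ)
    (v : ι × κ → ℝ) :
    ((blockDiagonalProdSigma M)ᵀ *ᵥ v) ⬝ᵥ ((blockDiagonalProdSigma M)ᵀ *ᵥ v)
      = ∑ i, ((M i)ᵀ *ᵥ fun c => v (i, c)) ⬝ᵥ ((M i)ᵀ *ᵥ fun c => v (i, c)) := by
  rw [dotProduct, ← Finset.univ_sigma_univ, Finset.sum_sigma]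
  simp only [blockDiagonalProdSigma_transpose_mulVec, dotProduct]

lemma blockDiagonalProdSigma_transpose_mulVec_consensus_eq_zero {M : ∀ i, Matrix κ (d i) ℝ}
    {v : κ → ℝ} (hv : (∑ i, M i * (M i)ᵀ) *ᵥ v = 0) :
    (blockDiagonalProdSigma M)ᵀ *ᵥ consensus v = 0 := by
  ext ⟨i, q⟩
  rw [blockDiagonalProdSigma_transpose_mulVec]
  exact congrFun (transpose_mulVec_eq_zero_of_sum_mul_transpose_mulVec_eq_zero hv i) q

lemma half_dotProduct_sum_mul_transpose_sub_le {M : ∀ i, Matrix κ (d i) ℝ} {L : ℝ} (hL : 0 ≤ L)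
    (hM : ∀ i v, (M i *ᵥ v) ⬝ᵥ (M i *ᵥ v) ≤ L * (v ⬝ᵥ v)) (z : ι × κ → ℝ) (w : κ → ℝ) :
    1 / 2 * (w ⬝ᵥ (∑ i, M i * (M i)ᵀ) *ᵥ w) - L * ((z - consensus w) ⬝ᵥ (z - consensus w))
      ≤ ((blockDiagonalProdSigma M)ᵀ *ᵥ z) ⬝ᵥ ((blockDiagonalProdSigma M)ᵀ *ᵥ z) := by
  rw [blockDiagonalProdSigma_transpose_mulVec_dotProduct_self, dotProduct_eq_sum_blocks,
    ← sum_transpose_mulVec_dotProduct_self, Finset.mul_sum, Finset.mul_sum,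
    ← Finset.sum_sub_distrib]
  refine Finset.sum_le_sum fun i _ => ?_
  set y : κ → ℝ := fun c => (z - consensus w : ι × κ → ℝ) (i, c)
  have hsplit : (fun c => z (i, c)) = w + y := by
    ext c
    simp [y, consensus]
  rw [hsplit, mulVec_add]
  linarith [half_dotProduct_self_sub_le ((M i)ᵀ *ᵥ w) ((M i)ᵀ *ᵥ y),
    transpose_mulVec_dotProduct_self_le hL (hM i) y]

end BlockDiagonal

theorem stmt8_general (n m : ℕ) (hn : 0 < n) (d : Fin n → ℕ) (LA μA μW γ : ℝ)
    (hμA : 0 < μA) (hμALA : μA ≤ LA) (hμW : 0 < μW)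
    (Ab : ∀ i : Fin n, Matrix (Fin m) (Fin (d i)) ℝ)
    (A : Matrix (Fin n × Fin m) ((i : Fin n) × Fin (d i)) ℝ)
    (hAdiag : A = Matrix.of fun p q => if p.1 = q.1 then Ab q.1 p.2 q.2 else 0)
    (hAi : ∀ (i : Fin n) (v : Fin (d i) → ℝ),
      ((Ab i).mulVec v) ⬝ᵥ ((Ab i).mulVec v) ≤ LA * (v ⬝ᵥ v))
    (S : Matrix (Fin m) (Fin m) ℝ) (hS : S = ((1 : ℝ) / n) • ∑ i, Ab i * (Ab i)ᵀ)
    (hSmin : ∀ w : Fin m → ℝ, (∀ v, S.mulVec v = 0 → w ⬝ᵥ v = 0) →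
      μA * (w ⬝ᵥ w) ≤ w ⬝ᵥ S.mulVec w)
    (W' : Matrix (Fin n × Fin m) (Fin n × Fin m) ℝ)
    (hWsymm : W'ᵀ = W')
    (hWrange : Set.range W'.mulVec
      = {y : Fin n × Fin m → ℝ | ∀ c : Fin m, ∑ i, y (i, c) = 0})
    (hWlow : ∀ y ∈ Set.range W'.mulVec,
      μW * (y ⬝ᵥ y) ≤ (W'.mulVec y) ⬝ᵥ (W'.mulVec y))
    (hγ2 : γ ^ 2 = (μA + LA) / μW)
    (B : Matrix (Fin n × Fin m) (((i : Fin n) × Fin (d i)) ⊕ (Fin n × Fin m)) ℝ)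
    (hB : B = Matrix.fromCols A (γ • W')) :
    ∀ z : Fin n × Fin m → ℝ,
      (∀ w : Fin n × Fin m → ℝ, Bᵀ.mulVec w = 0 → z ⬝ᵥ w = 0) →
      μA / 2 * (z ⬝ᵥ z) ≤ (Bᵀ.mulVec z) ⬝ᵥ (Bᵀ.mulVec z) := by
  intro z hz
  have hA : A = blockDiagonalProdSigma Ab := hAdiag
  have : Nonempty (Fin n) := ⟨⟨0, hn⟩⟩
  have hG : ∑ i, Ab i * (Ab i)ᵀ = (n : ℝ) • S := by
    rw [hS, smul_smul, mul_one_div_cancel (by positivity), one_smul]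
  have hBT : ∀ v, Bᵀ *ᵥ v = Sum.elim (Aᵀ *ᵥ v) (γ • (W' *ᵥ v)) := fun v => by
    rw [hB, transpose_fromCols, fromRows_mulVec, transpose_smul, hWsymm, smul_mulVec]
  set w := blockMean z
  set z₁ := z - consensus w
  have hw : ∀ v, S *ᵥ v = 0 → w ⬝ᵥ v = 0 := fun v hv =>
    blockMean_dotProduct_eq_zero_of_dotProduct_consensus_eq_zero <| hz _ <| by
      rw [hBT, hA, blockDiagonalProdSigma_transpose_mulVec_consensus_eq_zero
        (by rw [hG, smul_mulVec, hv, smul_zero]),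
        mulVec_consensus_eq_zero hWsymm fun y => hWrange.subset (Set.mem_range_self y),
        smul_zero, Sum.elim_zero_zero]
  have hAz := half_dotProduct_sum_mul_transpose_sub_le (hμA.le.trans hμALA) hAi z w
  rw [← hA, hG, smul_mulVec, dotProduct_smul, smul_eq_mul] at hAz
  have hWz := mul_dotProduct_sub_consensus_blockMean_le hWsymm hWrange hWlow z
  have hz₁ := dotProduct_self_nonneg z₁
  calc μA / 2 * (z ⬝ᵥ z) = μA / 2 * (z₁ ⬝ᵥ z₁) + n / 2 * (μA * (w ⬝ᵥ w)) := by
        rw [dotProduct_self_eq_sub_consensus_blockMean, Fintype.card_fin]; ring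
    _ ≤ μA * (z₁ ⬝ᵥ z₁) + n / 2 * (w ⬝ᵥ S *ᵥ w) := by
        gcongr
        · linarith
        · exact hSmin w hw
    _ = 1 / 2 * (n * (w ⬝ᵥ S *ᵥ w)) - LA * (z₁ ⬝ᵥ z₁) + γ ^ 2 * (μW * (z₁ ⬝ᵥ z₁)) := by
        rw [hγ2]; field_simp; ring
    _ ≤ (Aᵀ *ᵥ z) ⬝ᵥ (Aᵀ *ᵥ z) + γ ^ 2 * ((W' *ᵥ z) ⬝ᵥ (W' *ᵥ z)) := by gcongr
    _ = (Bᵀ *ᵥ z) ⬝ᵥ (Bᵀ *ᵥ z) := by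
        rw [hBT, sumElim_dotProduct_sumElim, smul_dotProduct, dotProduct_smul, smul_eq_mul,
          smul_eq_mul]
        ring

/-- Lemma 2, lower bound: for `A = diag(A₁,...,Aₙ)` with
`λ_min⁺(S) ≥ μ_A` (`S = (1/n)∑ AᵢAᵢᵀ`), `σ_max²(Aᵢ) ≤ L_A`, and `W'` symmetric PSD
with `range W' = L_m^⊥` and `λ_min⁺(W')² ≥ μ_{W'}`, `γ² = (μ_A+L_A)/μ_{W'}`,
every `z ⊥ ker Bᵀ` (for `B = [A γW']`) satisfies `‖Bᵀz‖² ≥ (μ_A/2)‖z‖²`. -/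
theorem stmt8 (n m : ℕ) (hn : 0 < n) (d : Fin n → ℕ) (LA μA LW μW γ : ℝ)
    (hμA : 0 < μA) (hμALA : μA ≤ LA) (hμW : 0 < μW) (hμWLW : μW ≤ LW)
    (Ab : ∀ i : Fin n, Matrix (Fin m) (Fin (d i)) ℝ)
    (A : Matrix (Fin n × Fin m) ((i : Fin n) × Fin (d i)) ℝ)
    (hAdiag : A = Matrix.of fun p q => if p.1 = q.1 then Ab q.1 p.2 q.2 else 0)
    (hAi : ∀ (i : Fin n) (v : Fin (d i) → ℝ),
      ((Ab i).mulVec v) ⬝ᵥ ((Ab i).mulVec v) ≤ LA * (v ⬝ᵥ v))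
    (S : Matrix (Fin m) (Fin m) ℝ) (hS : S = ((1 : ℝ) / n) • ∑ i, Ab i * (Ab i)ᵀ)
    (hSmin : ∀ w : Fin m → ℝ, (∀ v, S.mulVec v = 0 → w ⬝ᵥ v = 0) →
      μA * (w ⬝ᵥ w) ≤ w ⬝ᵥ S.mulVec w)
    (W' : Matrix (Fin n × Fin m) (Fin n × Fin m) ℝ)
    (hWsymm : W'ᵀ = W') (hWpsd : W'.PosSemidef)
    (hWrange : Set.range W'.mulVec
      = {y : Fin n × Fin m → ℝ | ∀ c : Fin m, ∑ i, y (i, c) = 0})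
    (hWlow : ∀ y ∈ Set.range W'.mulVec,
      μW * (y ⬝ᵥ y) ≤ (W'.mulVec y) ⬝ᵥ (W'.mulVec y))
    (hγ2 : γ ^ 2 = (μA + LA) / μW)
    (B : Matrix (Fin n × Fin m) (((i : Fin n) × Fin (d i)) ⊕ (Fin n × Fin m)) ℝ)
    (hB : B = Matrix.fromCols A (γ • W')) :
    ∀ z : Fin n × Fin m → ℝ,
      (∀ w : Fin n × Fin m → ℝ, Bᵀ.mulVec w = 0 → z ⬝ᵥ w = 0) →
      μA / 2 * (z ⬝ᵥ z) ≤ (Bᵀ.mulVec z) ⬝ᵥ (Bᵀ.mulVec z) :=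
  stmt8_general n m hn d LA μA μW γ hμA hμALA hμW Ab A hAdiag hAi S hS hSmin W' hWsymm hWrange hWlow
    hγ2 B hB
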